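/- On ℂ × ℝ³ with coordinates (z,q,r,s), setting z₁ = (r+is)z − iq and z₂ = iqz − (r−is), the 1-form ω = 2z dq + i(1+z²) dr + (1−z²) ds satisfies ω ∧ dω = 2 dz ∧ dz₁ ∧ dz₂. -/

import Mathlib

open Complex

/- Coordinates on ℂ × ℝ³: x = (z, q, r, s) with x.1 = z, x.2.1 = q,
x.2.2.1 = r, x.2.2.2 = s. -/

/-- Coefficient a = 2z of dq in ω. -/
noncomputable def aC : ℂ × ℝ × ℝ × ℝ → ℂ := fun x => 2 * x.1
/-- Coefficient b = i(1+z²) of dr in ω. -/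
noncomputable def bC : ℂ × ℝ × ℝ × ℝ → ℂ := fun x => I * (1 + x.1 ^ 2)
/-- Coefficient c = 1−z² of ds in ω. -/
noncomputable def cC : ℂ × ℝ × ℝ × ℝ → ℂ := fun x => 1 - x.1 ^ 2
/-- z₁ = (r+is)z − iq. -/
noncomputable def z1C : ℂ × ℝ × ℝ × ℝ → ℂ := fun x =>
  ((x.2.2.1 : ℂ) + I * (x.2.2.2 : ℂ)) * x.1 - I * (x.2.1 : ℂ)
/-- z₂ = iqz − (r−is). -/
noncomputable def z2C : ℂ × ℝ × ℝ × ℝ → ℂ := fun x =>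
  I * (x.2.1 : ℂ) * x.1 - ((x.2.2.1 : ℂ) - I * (x.2.2.2 : ℂ))

/-- Coordinate 1-forms. -/
def dzC (X : ℂ × ℝ × ℝ × ℝ) : ℂ := X.1
def dqC (X : ℂ × ℝ × ℝ × ℝ) : ℂ := (X.2.1 : ℂ)
def drC (X : ℂ × ℝ × ℝ × ℝ) : ℂ := (X.2.2.1 : ℂ)
def dsC (X : ℂ × ℝ × ℝ × ℝ) : ℂ := (X.2.2.2 : ℂ)

/-- The 1-form ω = 2z dq + i(1+z²) dr + (1−z²) ds evaluated on a tangent vector. -/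
noncomputable def omegaC (x X : ℂ × ℝ × ℝ × ℝ) : ℂ :=
  aC x * dqC X + bC x * drC X + cC x * dsC X

/-- dω = da∧dq + db∧dr + dc∧ds evaluated on a pair of tangent vectors, with the
convention (α∧β)(X,Y) = α(X)β(Y) − α(Y)β(X). -/
noncomputable def domegaC (x X Y : ℂ × ℝ × ℝ × ℝ) : ℂ :=
  (fderiv ℝ aC x X * dqC Y - fderiv ℝ aC x Y * dqC X) +
    (fderiv ℝ bC x X * drC Y - fderiv ℝ bC x Y * drC X) +
    (fderiv ℝ cC x X * dsC Y - fderiv ℝ cC x Y * dsC X)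

/-!
`dω = 2 dz ∧ θ` with `θ = dq + iz dr − z ds`. Modulo `dz`, the differentials `dz₁`, `dz₂` reduce
to `ζ₁ = z (dr + i ds) − i dq` and `ζ₂ = iz dq − (dr − i ds)`, and `ζ₁ ∧ ζ₂ = −ω ∧ θ` (this is
where `i² = −1` enters). Hence `ω ∧ dω = 2 ω ∧ dz ∧ θ = −2 dz ∧ ω ∧ θ = 2 dz ∧ ζ₁ ∧ ζ₂ = 2 dz ∧ dz₁ ∧ dz₂`.
-/

section Coordinates

variable (X : ℂ × ℝ × ℝ × ℝ)

noncomputable def zCLM : (ℂ × ℝ × ℝ × ℝ) →L[ℝ] ℂ := ContinuousLinearMap.fst ℝ ℂ (ℝ × ℝ × ℝ)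

noncomputable def qCLM : (ℂ × ℝ × ℝ × ℝ) →L[ℝ] ℂ :=
  ofRealCLM ∘L ContinuousLinearMap.fst ℝ ℝ (ℝ × ℝ) ∘L ContinuousLinearMap.snd ℝ ℂ (ℝ × ℝ × ℝ)

noncomputable def rCLM : (ℂ × ℝ × ℝ × ℝ) →L[ℝ] ℂ :=
  ofRealCLM ∘L ContinuousLinearMap.fst ℝ ℝ ℝ ∘L ContinuousLinearMap.snd ℝ ℝ (ℝ × ℝ) ∘L
    ContinuousLinearMap.snd ℝ ℂ (ℝ × ℝ × ℝ)

noncomputable def sCLM : (ℂ × ℝ × ℝ × ℝ) →L[ℝ] ℂ :=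
  ofRealCLM ∘L ContinuousLinearMap.snd ℝ ℝ ℝ ∘L ContinuousLinearMap.snd ℝ ℝ (ℝ × ℝ) ∘L
    ContinuousLinearMap.snd ℝ ℂ (ℝ × ℝ × ℝ)

@[simp] lemma zCLM_apply : zCLM X = dzC X := rfl
@[simp] lemma qCLM_apply : qCLM X = dqC X := rfl
@[simp] lemma rCLM_apply : rCLM X = drC X := rfl
@[simp] lemma sCLM_apply : sCLM X = dsC X := rfl

end Coordinates

noncomputable def thetaC (x X : ℂ × ℝ × ℝ × ℝ) : ℂ := dqC X + I * x.1 * drC X - x.1 * dsC X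

noncomputable def zeta1C (x X : ℂ × ℝ × ℝ × ℝ) : ℂ := x.1 * (drC X + I * dsC X) - I * dqC X

noncomputable def zeta2C (x X : ℂ × ℝ × ℝ × ℝ) : ℂ := I * x.1 * dqC X - (drC X - I * dsC X)

section Differentials

variable (x X : ℂ × ℝ × ℝ × ℝ)

lemma fderiv_aC_apply : fderiv ℝ aC x X = 2 * dzC X := by
  have h : HasFDerivAt aC _ x := zCLM.hasFDerivAt.const_mul (2 : ℂ)
  simp only [h.fderiv, smul_apply, zCLM_apply, smul_eq_mul]

lemma fderiv_bC_apply : fderiv ℝ bC x X = 2 * I * x.1 * dzC X := by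
  have h : HasFDerivAt bC _ x := ((zCLM.hasFDerivAt.pow 2).const_add 1).const_mul I
  simp only [h.fderiv, zCLM_apply, dzC, Nat.add_one_sub_one, pow_one, nsmul_eq_mul,
    Nat.cast_ofNat, smul_apply, smul_eq_mul]
  ring

lemma fderiv_cC_apply : fderiv ℝ cC x X = -2 * x.1 * dzC X := by
  have h : HasFDerivAt cC _ x := (zCLM.hasFDerivAt.pow 2).const_sub 1
  simp [h.fderiv, dzC]

lemma fderiv_z1C_apply : fderiv ℝ z1C x X = (x.2.2.1 + I * x.2.2.2) * dzC X + zeta1C x X := by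
  have h : HasFDerivAt z1C _ x :=
    ((rCLM.hasFDerivAt.add (sCLM.hasFDerivAt.const_mul I)).mul zCLM.hasFDerivAt).sub
      (qCLM.hasFDerivAt.const_mul I)
  simp only [h.fderiv, sub_apply, add_apply, smul_apply, smul_eq_mul, Pi.add_apply, smul_add,
    zCLM_apply, qCLM_apply, rCLM_apply, sCLM_apply, dzC, drC, dsC, zeta1C]
  ring

lemma fderiv_z2C_apply : fderiv ℝ z2C x X = I * x.2.1 * dzC X + zeta2C x X := by
  have h : HasFDerivAt z2C _ x :=
    ((qCLM.hasFDerivAt.const_mul I).mul zCLM.hasFDerivAt).sub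
      (rCLM.hasFDerivAt.sub (sCLM.hasFDerivAt.const_mul I))
  simp only [h.fderiv, sub_apply, add_apply, smul_apply, smul_eq_mul,
    zCLM_apply, qCLM_apply, rCLM_apply, sCLM_apply, dzC, dqC, zeta2C]
  ring

lemma domegaC_eq (Y : ℂ × ℝ × ℝ × ℝ) :
    domegaC x X Y = 2 * (dzC X * thetaC x Y - dzC Y * thetaC x X) := by
  simp only [domegaC, thetaC, fderiv_aC_apply, fderiv_bC_apply, fderiv_cC_apply]
  ring

end Differentials

lemma zeta1C_wedge_zeta2C (x X Y : ℂ × ℝ × ℝ × ℝ) :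
    zeta1C x X * zeta2C x Y - zeta1C x Y * zeta2C x X =
      -(omegaC x X * thetaC x Y - omegaC x Y * thetaC x X) := by
  simp only [zeta1C, zeta2C, omegaC, thetaC, aC, bC, cC]
  ring_nf
  simp only [I_sq]
  ring

/-- On ℂ × ℝ³, ω∧dω = 2 dz∧dz₁∧dz₂, evaluated on triples of tangent vectors with
(ω∧τ)(X,Y,Z) = ω(X)τ(Y,Z) − ω(Y)τ(X,Z) + ω(Z)τ(X,Y) and the determinant convention
for a triple wedge of 1-forms. -/
theorem omega_wedge_domega_eq (x X Y Z : ℂ × ℝ × ℝ × ℝ) :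
    omegaC x X * domegaC x Y Z - omegaC x Y * domegaC x X Z +
      omegaC x Z * domegaC x X Y =
    2 * (dzC X * (fderiv ℝ z1C x Y * fderiv ℝ z2C x Z - fderiv ℝ z1C x Z * fderiv ℝ z2C x Y) -
      dzC Y * (fderiv ℝ z1C x X * fderiv ℝ z2C x Z - fderiv ℝ z1C x Z * fderiv ℝ z2C x X) +
      dzC Z * (fderiv ℝ z1C x X * fderiv ℝ z2C x Y - fderiv ℝ z1C x Y * fderiv ℝ z2C x X)) := by
  simp only [domegaC_eq, fderiv_z1C_apply, fderiv_z2C_apply]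
  linear_combination -2 * dzC X * zeta1C_wedge_zeta2C x Y Z +
    2 * dzC Y * zeta1C_wedge_zeta2C x X Z - 2 * dzC Z * zeta1C_wedge_zeta2C x X Y
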